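/- Let n ≥ 5 and let α, β, γ be positive roots of A_{n−1} (repetitions allowed). If w ∈ S_n is such that w·(−α−β−γ) = w(−α−β−γ+ρ) − ρ is dominant, then w·(−α−β−γ) = 0. -/
import Mathlib


/-- ρ = (n−1, n−2, …, 1, 0) for type A_{n−1} realized in ℤ^n. -/
def weylRho (n : ℕ) : Fin n → ℤ := fun i => (n : ℤ) - 1 - (i : ℕ)

/-- The action of `w ∈ S_n` on weights: `w(λ)_i = λ_{w⁻¹(i)}`. -/
def wAct {n : ℕ} (w : Equiv.Perm (Fin n)) (lam : Fin n → ℤ) : Fin n → ℤ :=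
  fun i => lam (w⁻¹ i)

/-- The dot action `w·λ = w(λ+ρ) − ρ`. -/
def dotAct {n : ℕ} (w : Equiv.Perm (Fin n)) (lam : Fin n → ℤ) : Fin n → ℤ :=
  fun i => lam (w⁻¹ i) + weylRho n (w⁻¹ i) - weylRho n i

/-- `λ` is dominant iff `λ_1 ≥ λ_2 ≥ ⋯ ≥ λ_n`. -/
def IsDominant {n : ℕ} (lam : Fin n → ℤ) : Prop :=
  ∀ i j : Fin n, i ≤ j → lam j ≤ lam i

/-- The root `e_i − e_j`. -/
def posRoot {n : ℕ} (i j : Fin n) : Fin n → ℤ :=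
  fun k => (if k = i then 1 else 0) - (if k = j then 1 else 0)

/-- Positive roots of A_{n−1}: `e_i − e_j` with `i < j`. -/
def IsPosRoot {n : ℕ} (x : Fin n → ℤ) : Prop :=
  ∃ i j : Fin n, i < j ∧ x = posRoot i j

/-- Negative roots of A_{n−1}. -/
def IsNegRoot {n : ℕ} (x : Fin n → ℤ) : Prop :=
  ∃ i j : Fin n, i < j ∧ x = -(posRoot i j)

/-- The length ℓ(w): the number of positive roots sent to negative roots by `w`,
i.e. the number of inversions of `w`. -/
def weylLen {n : ℕ} (w : Equiv.Perm (Fin n)) : ℕ :=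
  (Finset.univ.filter (fun p : Fin n × Fin n => p.1 < p.2 ∧ w p.2 < w p.1)).card

lemma posRoot_ge {n} (a b i : Fin n) : -1 ≤ posRoot a b i := by
  unfold posRoot; split_ifs <;> norm_num

lemma posRoot_le {n} (a b i : Fin n) : posRoot a b i ≤ 1 := by
  unfold posRoot; split_ifs <;> norm_num

lemma posRoot_at_zero {n} {a b : Fin n} (hab : a < b) {j : Fin n} (hj : (j:ℕ) = 0) :
    0 ≤ posRoot a b j := by
  have hab' : (a:ℕ) < (b:ℕ) := hab
  unfold posRoot
  split_ifs <;> subst_vars <;> omega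

lemma posRoot_at_last {n} {a b : Fin n} (hab : a < b) {k : Fin n} (hk : (k:ℕ) = n - 1) :
    posRoot a b k ≤ 0 := by
  have hab' : (a:ℕ) < (b:ℕ) := hab
  have hb : (b:ℕ) < n := b.isLt
  unfold posRoot
  split_ifs <;> subst_vars <;> omega

lemma posRoot_step {n} {a b : Fin n} (hab : a < b) {j k : Fin n} (hjk : (j:ℕ) ≤ (k:ℕ)) :
    posRoot a b k - posRoot a b j ≤ 1 := by
  have hab' : (a:ℕ) < (b:ℕ) := hab
  unfold posRoot
  split_ifs <;> subst_vars <;> omega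

lemma sum_posRoot {n : ℕ} (a b : Fin n) : ∑ k, posRoot a b k = 0 := by
  simp [posRoot, Finset.sum_sub_distrib]

lemma no_bad {n : ℕ} (hn : 5 ≤ n) {a1 b1 a2 b2 a3 b3 : Fin n}
    (h1 : a1 < b1) (h2 : a2 < b2) (h3 : a3 < b3) {j k : Fin n}
    (hj : posRoot a1 b1 j + posRoot a2 b2 j + posRoot a3 b3 j ≤ -((j:ℕ):ℤ) - 1)
    (hk : (n:ℤ) - ((k:ℕ):ℤ) ≤ posRoot a1 b1 k + posRoot a2 b2 k + posRoot a3 b3 k) :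
    False := by
  have g1 := posRoot_ge a1 b1 j
  have g2 := posRoot_ge a2 b2 j
  have g3 := posRoot_ge a3 b3 j
  have l1 := posRoot_le a1 b1 k
  have l2 := posRoot_le a2 b2 k
  have l3 := posRoot_le a3 b3 k
  have hkn : (k:ℕ) < n := k.isLt
  by_cases hj0 : (j:ℕ) = 0
  · have z1 := posRoot_at_zero h1 hj0
    have z2 := posRoot_at_zero h2 hj0
    have z3 := posRoot_at_zero h3 hj0
    omega
  by_cases hkl : (k:ℕ) = n - 1
  · have z1 := posRoot_at_last h1 hkl
    have z2 := posRoot_at_last h2 hkl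
    have z3 := posRoot_at_last h3 hkl
    omega
  · have hjk : (j:ℕ) ≤ (k:ℕ) := by omega
    have s1 := posRoot_step h1 hjk
    have s2 := posRoot_step h2 hjk
    have s3 := posRoot_step h3 hjk
    omega



lemma dotAct_apply {n : ℕ} (w : Equiv.Perm (Fin n)) (lam : Fin n → ℤ) (i : Fin n) :
    dotAct w lam i = lam (w⁻¹ i) + weylRho n (w⁻¹ i) - weylRho n i := rfl

/-- For n ≥ 5 and positive roots α, β, γ of A_{n−1} (repetitions allowed),
if w·(−α−β−γ) is dominant then it is zero. -/
theorem dot_neg_three_roots_dominant_eq_zero (n : ℕ) (hn : 5 ≤ n) (α β γ : Fin n → ℤ)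
    (hα : IsPosRoot α) (hβ : IsPosRoot β) (hγ : IsPosRoot γ) (w : Equiv.Perm (Fin n))
    (hdom : IsDominant (dotAct w (-α - β - γ))) :
    dotAct w (-α - β - γ) = 0 := by
  obtain ⟨a1, b1, h1, rfl⟩ := hα
  obtain ⟨a2, b2, h2, rfl⟩ := hβ
  obtain ⟨a3, b3, h3, rfl⟩ := hγ
  set lam : Fin n → ℤ := -posRoot a1 b1 - posRoot a2 b2 - posRoot a3 b3 with hlam
  have hc : ∀ x : Fin n,
      lam x = -(posRoot a1 b1 x + posRoot a2 b2 x + posRoot a3 b3 x) := by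
    intro x
    simp only [hlam, Pi.sub_apply, Pi.neg_apply]
    ring
  have hl0 : ∑ i, lam i = 0 := by
    simp only [hc]
    rw [Finset.sum_neg_distrib, Finset.sum_add_distrib, Finset.sum_add_distrib,
      sum_posRoot, sum_posRoot, sum_posRoot]
    ring
  have hsum : ∑ i, dotAct w lam i = 0 := by
    simp only [dotAct_apply, Finset.sum_sub_distrib]
    rw [Finset.sum_add_distrib, Equiv.sum_comp w⁻¹ lam, Equiv.sum_comp w⁻¹ (weylRho n)]
    rw [hl0]; ring
  have hrho_bds : ∀ x : Fin n, 0 ≤ weylRho n x ∧ weylRho n x ≤ (n:ℤ) - 1 := by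
    intro x
    have := x.isLt
    simp only [weylRho]
    omega
  by_cases H : ∀ i : Fin n, posRoot a1 b1 i + posRoot a2 b2 i + posRoot a3 b3 i ≤ weylRho n i
  · -- every entry of ρ + λ is ≥ 0, so the last entry of ν is ≥ 0, so ν ≥ 0
    have hlt : n - 1 < n := by omega
    have hρlast : weylRho n (⟨n - 1, hlt⟩ : Fin n) = 0 := by
      simp only [weylRho]
      omega
    have hlast0 : 0 ≤ dotAct w lam ⟨n - 1, hlt⟩ := by
      rw [dotAct_apply, hρlast, hc]
      have hH := H (w⁻¹ (⟨n - 1, hlt⟩ : Fin n))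
      have hr := hrho_bds (w⁻¹ (⟨n - 1, hlt⟩ : Fin n))
      linarith [hH, hr.1, hr.2]
    have hnonneg : ∀ i : Fin n, 0 ≤ dotAct w lam i := by
      intro i
      have hle : i ≤ (⟨n - 1, hlt⟩ : Fin n) := by
        rw [Fin.le_def]
        exact Nat.le_sub_one_of_lt i.isLt
      exact le_trans hlast0 (hdom i ⟨n - 1, hlt⟩ hle)
    funext i
    have := (Finset.sum_eq_zero_iff_of_nonneg
      (fun i _ => hnonneg i)).mp hsum i (Finset.mem_univ i)
    simpa using this
  · push_neg at H
    obtain ⟨k, hk⟩ := H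
    have hA : ∀ i : Fin n, weylRho n i - ((n:ℤ) - 1)
        ≤ posRoot a1 b1 i + posRoot a2 b2 i + posRoot a3 b3 i := by
      intro i
      by_contra hcon
      push_neg at hcon
      refine no_bad hn h1 h2 h3 (j := i) (k := k) ?_ ?_
      · simp only [weylRho] at hcon
        omega
      · simp only [weylRho] at hk
        omega
    have hlt0 : 0 < n := by omega
    have hρz : weylRho n (⟨0, hlt0⟩ : Fin n) = (n:ℤ) - 1 := by
      simp [weylRho]
    have hz0 : dotAct w lam ⟨0, hlt0⟩ ≤ 0 := by
      rw [dotAct_apply, hρz, hc]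
      have hH := hA (w⁻¹ (⟨0, hlt0⟩ : Fin n))
      linarith [hH]
    have hnonpos : ∀ i : Fin n, dotAct w lam i ≤ 0 := by
      intro i
      have hle : (⟨0, hlt0⟩ : Fin n) ≤ i := by
        rw [Fin.le_def]
        exact Nat.zero_le _
      exact le_trans (hdom ⟨0, hlt0⟩ i hle) hz0
    funext i
    have := (Finset.sum_eq_zero_iff_of_nonpos
      (fun i _ => hnonpos i)).mp hsum i (Finset.mem_univ i)
    simpa using this
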